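/- arXiv:2205.04388 — 2 statements merged into one kernel-verified Lean document; each statement's English description precedes it below -/
import Mathlib

section
/- Let S and Q be periodic sequences in ℝ, each with an m-point motif and a minimal period (l for S, l' for Q). Then there exist a > 0 and b ∈ ℝ with Q = {a·x + b : x ∈ S} (an orientation-preserving similarity) if and only if there exists s ∈ ZMod m such that (1/l')·D(Q) = σ_s((1/l)·D(S)). In other words, the normalized distance list (entries divided by the period) considered up to cyclic permutation is a complete invariant of periodic sequences up to orientation-preserving similarity. -/
/-!
Enumerate the points of a periodic sequence increasingly by `ℤ`; consecutive gaps of the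
enumeration run through the distance list cyclically. An increasing similarity maps one
enumeration onto the other up to an index shift `t`, so comparing gaps gives
`D(Q) = a · σ_t D(S)` and comparing points one period apart gives `l' = a l`. Conversely,
proportional shifted gaps sum up to an affine relation between the enumerations, hence
between the point sets.
-/

/-- A periodic sequence in `ℝ` with an `m`-point motif `p` and period `l`:
the set `{p i + l * j : i ∈ Fin m, j ∈ ℤ}` where `0 ≤ p 0 < p 1 < ⋯ < p (m-1) < l`. -/
structure PSeq (m : ℕ) where
  m_pos : 0 < m
  l : ℝ
  l_pos : 0 < l
  p : Fin m → ℝ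
  p_strict : StrictMono p
  p0_nonneg : 0 ≤ p ⟨0, m_pos⟩
  p_lt : ∀ i, p i < l

namespace PSeq

variable {m : ℕ}

/-- The set of points of the periodic sequence. -/
def pts (S : PSeq m) : Set ℝ := {x | ∃ (i : Fin m) (j : ℤ), x = S.p i + S.l * j}

/-- The period is minimal: the same set of points cannot be produced with a smaller period. -/
def IsMinimal (S : PSeq m) : Prop := ∀ (m' : ℕ) (T : PSeq m'), T.pts = S.pts → S.l ≤ T.l

/-- The distance list `D` of the periodic sequence, indexed by `ZMod m`:
`D i = p (i+1) - p i` for `i < m - 1`, and `D (m-1) = (p 0 + l) - p (m-1)`. -/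
noncomputable def D (S : PSeq m) : ZMod m → ℝ := fun i =>
  letI : NeZero m := ⟨S.m_pos.ne'⟩
  if h : i.val + 1 < m then S.p ⟨i.val + 1, h⟩ - S.p ⟨i.val, i.val_lt⟩
  else S.p ⟨0, S.m_pos⟩ + S.l - S.p ⟨i.val, i.val_lt⟩

end PSeq

/-- The cyclic shift `σ_s` acting on vectors indexed by `ZMod n`: `(σ_s v) i = v (i + s)`. -/
def shiftVec {n : ℕ} (s : ZMod n) (v : ZMod n → ℝ) : ZMod n → ℝ := fun i => v (i + s)

/-- The reversal `ρ`: `(ρ v) i = v (m - 1 - i)` (note `m - 1 = -1` in `ZMod m`). -/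
def revVec {n : ℕ} (v : ZMod n → ℝ) : ZMod n → ℝ := fun i => v (-1 - i)

theorem Function.Periodic.eq_apply_zero_of_int {G : Type*} [AddCommGroup G] {d : ℤ → G}
    (hd : Function.Periodic d 1) (n : ℤ) : d n = d 0 := by
  simpa using hd.int_mul n 0

theorem StrictMono.int_eq_add_of_surjective {h : ℤ → ℤ} (hmono : StrictMono h)
    (hsurj : Function.Surjective h) (n : ℤ) : h n = n + h 0 := by
  have hsucc (k : ℤ) : h (k + 1) = h k + 1 := by
    have := (hmono.orderIsoOfSurjective h hsurj).map_succ k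
    rwa [Order.succ_eq_add_one, Order.succ_eq_add_one] at this
  have hconst : Function.Periodic (fun k => h k - k) 1 := fun k => by
    simp only [hsucc]; ring
  linarith [hconst.eq_apply_zero_of_int n]

theorem StrictMono.exists_shift_of_range_eq {α : Type*} [LinearOrder α] {f g : ℤ → α}
    (hf : StrictMono f) (hg : StrictMono g) (hfg : Set.range f = Set.range g) :
    ∃ t : ℤ, ∀ n, g n = f (n + t) := by
  choose h hh using fun n => hfg ▸ Set.mem_range_self (f := g) n
  have hmono : StrictMono h := fun a b hab => hf.lt_iff_lt.mp (by rw [hh a, hh b]; exact hg hab)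
  have hsurj : Function.Surjective h := fun k => by
    obtain ⟨n, hn⟩ : f k ∈ Set.range g := hfg ▸ Set.mem_range_self k
    exact ⟨n, hf.injective (by rw [hh n, hn])⟩
  exact ⟨h 0, fun n => by rw [← hh n, hmono.int_eq_add_of_surjective hsurj n]⟩

theorem Int.exists_eq_mul_add_fin {m : ℕ} (hm : 0 < m) (n : ℤ) :
    ∃ (q : ℤ) (r : Fin m), n = m * q + (r : ℕ) := by
  have hm' : (0 : ℤ) < m := by exact_mod_cast hm
  have hnonneg := Int.emod_nonneg n hm'.ne'
  have hlt := Int.emod_lt_of_pos n hm'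
  refine ⟨n / m, ⟨(n % m).toNat, by omega⟩, ?_⟩
  simp only [Int.toNat_of_nonneg hnonneg]
  exact (Int.mul_ediv_add_emod n m).symm

namespace PSeq

variable {m : ℕ}

/-- The points of `S` in increasing order: `S.enum (m * q + r) = S.p r + S.l * q`. -/
noncomputable def enum (S : PSeq m) (n : ℤ) : ℝ :=
  S.p ⟨(n % m).toNat, by
    have hm : (0 : ℤ) < m := by exact_mod_cast S.m_pos
    have := Int.emod_nonneg n hm.ne'
    have := Int.emod_lt_of_pos n hm
    omega⟩ + S.l * (n / m : ℤ)

theorem enum_mul_add (S : PSeq m) (q : ℤ) (r : Fin m) :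
    S.enum (m * q + (r : ℕ)) = S.p r + S.l * q := by
  have hm : (0 : ℤ) < m := by exact_mod_cast S.m_pos
  have hr : ((r : ℕ) : ℤ) < m := by exact_mod_cast r.isLt
  have hmod : ((m : ℤ) * q + (r : ℕ)) % m = (r : ℕ) := by
    rw [add_comm, Int.add_mul_emod_self_left, Int.emod_eq_of_lt (by positivity) hr]
  have hdiv : ((m : ℤ) * q + (r : ℕ)) / m = q := by
    rw [add_comm, Int.add_mul_ediv_left _ _ hm.ne', Int.ediv_eq_zero_of_lt (by positivity) hr,
      zero_add]
  simp only [enum, hmod, hdiv, Int.toNat_natCast]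

theorem D_pos (S : PSeq m) (i : ZMod m) : 0 < S.D i := by
  have : NeZero m := ⟨S.m_pos.ne'⟩
  unfold D
  split_ifs with h
  · exact sub_pos.mpr (S.p_strict (Fin.mk_lt_mk.mpr i.val.lt_succ_self))
  · linarith [S.p_lt ⟨i.val, i.val_lt⟩, S.p0_nonneg]

theorem enum_succ (S : PSeq m) (n : ℤ) : S.enum (n + 1) = S.enum n + S.D n := by
  have : NeZero m := ⟨S.m_pos.ne'⟩
  obtain ⟨q, r, rfl⟩ := Int.exists_eq_mul_add_fin S.m_pos n
  have hval : ((((m : ℤ) * q + (r : ℕ) : ℤ) : ZMod m)).val = r := by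
    simp [ZMod.val_natCast_of_lt r.isLt]
  simp only [D, hval, enum_mul_add]
  split_ifs with h
  · have := S.enum_mul_add q ⟨r + 1, h⟩
    push_cast at this
    rw [add_assoc, this]
    ring
  · have hr : ((r : ℕ) : ℤ) + 1 = m := by omega
    have := S.enum_mul_add (q + 1) ⟨0, S.m_pos⟩
    rw [show (m : ℤ) * q + (r : ℕ) + 1 = m * (q + 1) + ((0 : ℕ) : ℤ) by
      push_cast; linear_combination hr, this]
    push_cast
    ring

theorem enum_strictMono (S : PSeq m) : StrictMono S.enum :=
  strictMono_int_of_lt_succ fun n => by linarith [S.enum_succ n, S.D_pos n]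

theorem enum_add_period (S : PSeq m) (n : ℤ) : S.enum (n + m) = S.enum n + S.l := by
  obtain ⟨q, r, rfl⟩ := Int.exists_eq_mul_add_fin S.m_pos n
  rw [show (m : ℤ) * q + (r : ℕ) + m = m * (q + 1) + (r : ℕ) by ring, enum_mul_add, enum_mul_add]
  push_cast
  ring

theorem range_enum (S : PSeq m) : Set.range S.enum = S.pts := by
  ext x
  constructor
  · rintro ⟨n, rfl⟩
    obtain ⟨q, r, rfl⟩ := Int.exists_eq_mul_add_fin S.m_pos n
    exact ⟨r, q, S.enum_mul_add q r⟩
  · rintro ⟨i, j, rfl⟩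
    exact ⟨m * j + (i : ℕ), S.enum_mul_add j i⟩

theorem pts_eq_image_iff {S Q : PSeq m} {a : ℝ} (b : ℝ) (ha : 0 < a) :
    Q.pts = (fun x => a * x + b) '' S.pts ↔ ∃ t : ℤ, ∀ n, Q.enum n = a * S.enum (n + t) + b := by
  rw [← Q.range_enum, ← S.range_enum, ← Set.range_comp]
  constructor
  · intro h
    have hmono : StrictMono fun n => a * S.enum n + b := fun x y hxy => by
      simpa using mul_lt_mul_of_pos_left (S.enum_strictMono hxy) ha
    exact hmono.exists_shift_of_range_eq Q.enum_strictMono h.symm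
  · rintro ⟨t, ht⟩
    ext x
    constructor
    · rintro ⟨n, rfl⟩
      exact ⟨n + t, (ht n).symm⟩
    · rintro ⟨n, rfl⟩
      exact ⟨n - t, by simp [ht]⟩

section ShiftedSimilar

variable {S Q : PSeq m} {a b : ℝ} {t : ℤ}

theorem l_eq_of_enum_eq (h : ∀ n, Q.enum n = a * S.enum (n + t) + b) : Q.l = a * S.l := by
  have hQ := Q.enum_add_period 0
  simp only [h, zero_add] at hQ
  rw [add_comm (m : ℤ), S.enum_add_period] at hQ
  linarith

theorem D_eq_of_enum_eq (h : ∀ n, Q.enum n = a * S.enum (n + t) + b) (n : ℤ) :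
    Q.D n = a * S.D (n + t) := by
  have hQ := Q.enum_succ n
  rw [h, h, add_right_comm, S.enum_succ] at hQ
  push_cast at hQ
  linarith

theorem enum_eq_of_D_eq (h : ∀ n : ℤ, Q.D n = a * S.D (n + t)) (n : ℤ) :
    Q.enum n = a * S.enum (n + t) + (Q.enum 0 - a * S.enum t) := by
  have hconst : Function.Periodic (fun k => Q.enum k - a * S.enum (k + t)) 1 := fun k => by
    simp only [Q.enum_succ, add_right_comm k 1 t, S.enum_succ, h]
    push_cast
    ring
  have := hconst.eq_apply_zero_of_int n
  simp only [zero_add] at this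
  linarith

end ShiftedSimilar

theorem smul_D_eq_shiftVec_iff {S Q : PSeq m} {s : ZMod m} :
    (1 / Q.l) • Q.D = shiftVec s ((1 / S.l) • S.D) ↔ ∀ i, Q.D i = Q.l / S.l * S.D (i + s) := by
  have hQ := Q.l_pos.ne'
  have hS := S.l_pos.ne'
  simp only [funext_iff, shiftVec, Pi.smul_apply, smul_eq_mul]
  refine forall_congr' fun i => ?_
  field_simp

end PSeq

theorem normalized_distance_list_complete_up_to_oriented_similarity_general {m : ℕ}
    (S Q : PSeq m) :
    (∃ (a b : ℝ), 0 < a ∧ Q.pts = (fun x => a * x + b) '' S.pts) ↔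
    ∃ s : ZMod m, (1 / Q.l) • Q.D = shiftVec s ((1 / S.l) • S.D) := by
  constructor
  · rintro ⟨a, b, ha, himg⟩
    obtain ⟨t, ht⟩ := (PSeq.pts_eq_image_iff b ha).1 himg
    refine ⟨t, PSeq.smul_D_eq_shiftVec_iff.2 fun i => ?_⟩
    obtain ⟨n, rfl⟩ := ZMod.intCast_surjective i
    rw [PSeq.l_eq_of_enum_eq ht, mul_div_cancel_right₀ _ S.l_pos.ne', PSeq.D_eq_of_enum_eq ht]
  · rintro ⟨s, hs⟩
    obtain ⟨t, rfl⟩ := ZMod.intCast_surjective s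
    have hD := PSeq.smul_D_eq_shiftVec_iff.1 hs
    exact ⟨Q.l / S.l, _, div_pos Q.l_pos S.l_pos,
      (PSeq.pts_eq_image_iff _ (div_pos Q.l_pos S.l_pos)).2 ⟨t, PSeq.enum_eq_of_D_eq (hD ·)⟩⟩

/-- the normalized distance list up to cyclic permutation is a complete
invariant of periodic sequences up to orientation-preserving similarity. -/
theorem normalized_distance_list_complete_up_to_oriented_similarity {m : ℕ}
    (S Q : PSeq m) (hS : S.IsMinimal) (hQ : Q.IsMinimal) :
    (∃ (a b : ℝ), 0 < a ∧ Q.pts = (fun x => a * x + b) '' S.pts) ↔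
    ∃ s : ZMod m, (1 / Q.l) • Q.D = shiftVec s ((1 / S.l) • S.D) :=
  normalized_distance_list_complete_up_to_oriented_similarity_general S Q
end

section
/- Let d ≥ 1 and let S, Q ⊆ ℝ × ℝ^d be high-dimensional periodic sequences with m-point motifs p and q and minimal periods l and l', such that the value projections v(p_0), …, v(p_{m−1}) affinely span ℝ^d and likewise v(q_0), …, v(q_{m−1}) affinely span ℝ^d. Then there exist a ∈ ℝ and an isometry g : ℝ^d → ℝ^d with Q = {(t + a, g(x)) : (t,x) ∈ S} if and only if l = l' and there exists s ∈ ZMod m such that DL(Q)_j = DL(S)_{j+s} for all j ∈ ZMod m and ‖v(q_j) − v(q_{j+i})‖ = ‖v(p_{j+s}) − v(p_{j+s+i})‖ for all j ∈ ZMod m and all i ∈ {1, …, m−1}. In other words, the time-value invariant TVI (the time distance list together with the full cyclic distance matrix of the value projection, considered up to a common cyclic permutation) is a complete invariant of such sequences up to the equivalence f×g of Definition of high-dimensional periodic sequences. -/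
/-- A high-dimensional periodic sequence in `ℝ × ℝ^d`: a period `l > 0` and a motif
`p : Fin m → ℝ × ℝ^d` with strictly increasing time coordinates in `[0, l)`, giving the set
`{p i + j·l·e₁ : i ∈ Fin m, j ∈ ℤ}`. -/
structure HSeq (d m : ℕ) where
  m_pos : 0 < m
  l : ℝ
  l_pos : 0 < l
  p : Fin m → ℝ × EuclideanSpace ℝ (Fin d)
  t_strict : StrictMono fun i => (p i).1
  t0_nonneg : 0 ≤ (p ⟨0, m_pos⟩).1
  t_lt : ∀ i, (p i).1 < l

namespace HSeq

variable {d m : ℕ}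

/-- The point set `{p i + j·l·e₁ : i ∈ Fin m, j ∈ ℤ}` of the sequence. -/
def pts (S : HSeq d m) : Set (ℝ × EuclideanSpace ℝ (Fin d)) :=
  {x | ∃ (i : Fin m) (j : ℤ), x = ((S.p i).1 + S.l * j, (S.p i).2)}

/-- The time projection `t(S) ⊆ ℝ` of the point set. -/
def tpts (S : HSeq d m) : Set ℝ :=
  {r | ∃ (i : Fin m) (j : ℤ), r = (S.p i).1 + S.l * j}

/-- The period is minimal: the same set of points cannot be produced with a smaller period. -/
def IsMinimal (S : HSeq d m) : Prop :=
  ∀ (m' : ℕ) (T : HSeq d m'), T.pts = S.pts → S.l ≤ T.l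

/-- The time distance list `DL`, indexed by `ZMod m`. -/
noncomputable def DL (S : HSeq d m) : ZMod m → ℝ := fun i =>
  letI : NeZero m := ⟨S.m_pos.ne'⟩
  if h : i.val + 1 < m then (S.p ⟨i.val + 1, h⟩).1 - (S.p ⟨i.val, i.val_lt⟩).1
  else (S.p ⟨0, S.m_pos⟩).1 + S.l - (S.p ⟨i.val, i.val_lt⟩).1

/-- The time distance list of the multiple `(n/m)S` with `m ∣ n`: the `(n/m)`-fold
concatenation of `DL S`. -/
noncomputable def DLc (S : HSeq d m) (n : ℕ) : ZMod n → ℝ :=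
  fun i => S.DL ((i.val : ZMod m))

/-- The value projection of the motif of the multiple `(n/m)S` with `m ∣ n`,
indexed by `ZMod n`. -/
def vproj (S : HSeq d m) (n : ℕ) : ZMod n → EuclideanSpace ℝ (Fin d) :=
  fun i => (S.p ⟨i.val % m, Nat.mod_lt _ S.m_pos⟩).2

/-- The oriented elastic metric for high-dimensional periodic sequences:
`Elm^o(S,Q) = min_{s ∈ ZMod n} max {d_t(s), d_v(s)}` with `n = lcm(m₁,m₂)`, where
`d_t(s) = max_j |DL(S')_j - DL(Q')_{j+s}|` and `d_v(s)` is the max over rows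
`i ∈ {1,…,n-1}` and columns `j ∈ ZMod n` of `|d_{ij}(S') - d_{i,j+s}(Q')|`
for the cyclic distance matrices of the value projections of the multiples
`S' = (n/m₁)S`, `Q' = (n/m₂)Q`. -/
noncomputable def Elmo {m₁ m₂ : ℕ} (S : HSeq d m₁) (Q : HSeq d m₂) : ℝ :=
  letI : NeZero (Nat.lcm m₁ m₂) := ⟨(Nat.lcm_pos S.m_pos Q.m_pos).ne'⟩
  Finset.univ.inf' (Finset.univ_nonempty_iff.mpr ⟨0⟩)
    fun s : ZMod (Nat.lcm m₁ m₂) =>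
      max
        (Finset.univ.sup' (Finset.univ_nonempty_iff.mpr ⟨0⟩)
          fun j : ZMod (Nat.lcm m₁ m₂) =>
            |S.DLc (Nat.lcm m₁ m₂) j - Q.DLc (Nat.lcm m₁ m₂) (j + s)|)
        ((((Finset.Icc 1 (Nat.lcm m₁ m₂ - 1) ×ˢ
            (Finset.univ : Finset (ZMod (Nat.lcm m₁ m₂)))).sup
          fun x : ℕ × ZMod (Nat.lcm m₁ m₂) =>
            Real.nnabs
              (‖S.vproj (Nat.lcm m₁ m₂) x.2 -
                  S.vproj (Nat.lcm m₁ m₂) ((x.1 : ZMod (Nat.lcm m₁ m₂)) + x.2)‖ -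
                ‖Q.vproj (Nat.lcm m₁ m₂) (x.2 + s) -
                  Q.vproj (Nat.lcm m₁ m₂) ((x.1 : ZMod (Nat.lcm m₁ m₂)) + x.2 + s)‖)) : NNReal) : ℝ)

end HSeq

/-!
Enumerate the points of a sequence by `ℤ` in increasing time, `j * m + i ↦ (t(p_i) + j l, v(p_i))`;
the gaps between consecutive times are then the entries of `DL`, read cyclically. A map
`(t, x) ↦ (t + a, g x)` carrying `S` onto `Q` preserves the time order, so it induces an order
automorphism of `ℤ`, i.e. a shift by some `c`; reading times and values along this shift gives the
period, the shifted `DL` and the shifted distance matrix. Conversely, a shift of `DL` makes the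
times of `Q` a translate of the shifted times of `S`, and the cyclic distance matrix records all
pairwise distances of the value motifs. By polarization these determine the Gram matrix of the
differences `v(p_j) - v(p_0)`, which span `ℝ^d`, so an isometry of `ℝ^d` matches the two motifs.
-/

open scoped RealInnerProductSpace

theorem Int.eq_add_apply_zero_of_strictMono_of_surjective {φ : ℤ → ℤ} (hmono : StrictMono φ)
    (hsurj : Function.Surjective φ) (k : ℤ) : φ k = k + φ 0 := by
  have hsucc (n : ℤ) : φ (n + 1) = φ n + 1 := by
    simpa [Order.succ_eq_add_one] using (hmono.orderIsoOfSurjective φ hsurj).map_succ n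
  have hper : Function.Periodic (fun n => φ n - n) 1 := fun n => by simp [hsucc]
  simpa [sub_eq_iff_eq_add'] using hper.int_mul_eq k

theorem Int.exists_eq_mul_add_fin_s17 (m : ℕ) [NeZero m] (k : ℤ) :
    ∃ (j : ℤ) (i : Fin m), k = j * m + i := by
  obtain ⟨⟨j, i⟩, rfl⟩ := (Int.divModEquiv m).symm.surjective k
  exact ⟨j, i, rfl⟩

theorem ZMod.intCast_mul_add_natCast (m : ℕ) (j : ℤ) (i : ℕ) :
    ((j * m + i : ℤ) : ZMod m) = i := by
  simp

theorem LinearMap.exists_comp_eq_of_surjective_of_ker_le {R M N P : Type*} [Ring R]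
    [AddCommGroup M] [Module R M] [AddCommGroup N] [Module R N] [AddCommGroup P] [Module R P]
    {ψ : M →ₗ[R] N} {φ : M →ₗ[R] P} (hψ : Function.Surjective ψ)
    (h : ker ψ ≤ ker φ) :
    ∃ T : N →ₗ[R] P, T ∘ₗ ψ = φ := by
  refine ⟨(ker ψ).liftQ φ h ∘ₗ (ψ.quotKerEquivOfSurjective hψ).symm.toLinearMap, ?_⟩
  ext x
  have : (ψ.quotKerEquivOfSurjective hψ).symm (ψ x) = Submodule.Quotient.mk x :=
    (LinearEquiv.symm_apply_eq _).mpr (quotKerEquivOfSurjective_apply_mk ψ hψ x).symm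
  simp [this]

theorem exists_linearIsometryEquiv_apply_eq_of_inner_eq {ι E : Type*} [NormedAddCommGroup E]
    [InnerProductSpace ℝ E] [FiniteDimensional ℝ E] {F G : ι → E}
    (hF : Submodule.span ℝ (Set.range F) = ⊤) (h : ∀ i j, ⟪G i, G j⟫ = ⟪F i, F j⟫) :
    ∃ T : E ≃ₗᵢ[ℝ] E, ∀ i, T (F i) = G i := by
  set ψ := Finsupp.linearCombination ℝ F
  set φ := Finsupp.linearCombination ℝ G
  have hψ : Function.Surjective ψ := by
    rw [← LinearMap.range_eq_top, Finsupp.range_linearCombination, hF]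
  have hinner (c c' : ι →₀ ℝ) : ⟪φ c, φ c'⟫ = ⟪ψ c, ψ c'⟫ := by
    simp only [ψ, φ, Finsupp.linearCombination_apply, Finsupp.sum, sum_inner, inner_sum,
      real_inner_smul_left, real_inner_smul_right, h]
  have hker : LinearMap.ker ψ ≤ LinearMap.ker φ := fun c hc => by
    have := hinner c c
    rw [LinearMap.mem_ker.mp hc, inner_zero_left] at this
    exact inner_self_eq_zero.mp this
  obtain ⟨T, hT⟩ := LinearMap.exists_comp_eq_of_surjective_of_ker_le hψ hker
  have hTψ (c : ι →₀ ℝ) : T (ψ c) = φ c := LinearMap.congr_fun hT c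
  have hTinner (x y : E) : ⟪T x, T y⟫ = ⟪x, y⟫ := by
    obtain ⟨c, rfl⟩ := hψ x
    obtain ⟨c', rfl⟩ := hψ y
    rw [hTψ, hTψ, hinner]
  refine ⟨(T.isometryOfInner hTinner).toLinearIsometryEquiv rfl, fun i => ?_⟩
  simpa [ψ, φ] using hTψ (Finsupp.single i 1)

theorem exists_isometryEquiv_apply_eq_of_dist_eq {ι E : Type*} [NormedAddCommGroup E]
    [InnerProductSpace ℝ E] [FiniteDimensional ℝ E] {f g : ι → E}
    (hf : affineSpan ℝ (Set.range f) = ⊤) (h : ∀ i j, dist (g i) (g j) = dist (f i) (f j)) :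
    ∃ e : E ≃ᵢ E, ∀ i, e (f i) = g i := by
  obtain ⟨_, i₀, -⟩ := AffineSubspace.nonempty_of_affineSpan_eq_top ℝ E E hf
  have hspan : Submodule.span ℝ (Set.range fun i => f i - f i₀) = ⊤ := by
    have := vectorSpan_range_eq_span_range_vsub_right ℝ f i₀
    rw [← direction_affineSpan, hf, AffineSubspace.direction_top] at this
    simpa only [vsub_eq_sub] using this.symm
  -- polarization identity
  have hinner (i j : ι) : ⟪g i - g i₀, g j - g i₀⟫ = ⟪f i - f i₀, f j - f i₀⟫ := by
    have hG := norm_sub_sq_real (g i - g i₀) (g j - g i₀)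
    have hF := norm_sub_sq_real (f i - f i₀) (f j - f i₀)
    simp only [sub_sub_sub_cancel_right, ← dist_eq_norm, h] at hG hF
    linarith
  obtain ⟨T, hT⟩ := exists_linearIsometryEquiv_apply_eq_of_inner_eq hspan hinner
  refine ⟨(IsometryEquiv.addRight (-f i₀)).trans
    (T.toIsometryEquiv.trans (IsometryEquiv.addRight (g i₀))), fun i => ?_⟩
  simp [← sub_eq_add_neg, hT i]

namespace HSeq

variable {d m : ℕ}

theorem neZero (S : HSeq d m) : NeZero m := ⟨S.m_pos.ne'⟩

/-- `S.vproj m j` is `(S.p (S.toFin j)).2` by definition. -/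
def toFin (S : HSeq d m) (j : ZMod m) : Fin m := ⟨j.val % m, Nat.mod_lt _ S.m_pos⟩

/-- The time of the `k`-th point of `S` in increasing order, `k = j * m + i ↦ t(p_i) + j l`. -/
noncomputable def time (S : HSeq d m) (k : ℤ) : ℝ :=
  (S.p (S.toFin k)).1 + S.l * (k / m : ℤ)

variable (S : HSeq d m)

theorem toFin_natCast (i : Fin m) : S.toFin (i : ℕ) = i :=
  Fin.ext <| by simp [toFin, ZMod.val_natCast, Nat.mod_eq_of_lt i.isLt]

theorem time_mul_add (j : ℤ) (i : Fin m) : S.time (j * m + i) = (S.p i).1 + S.l * j := by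
  have hm : (m : ℤ) ≠ 0 := by exact_mod_cast S.m_pos.ne'
  have hdiv : (j * m + i) / (m : ℤ) = j := by
    rw [add_comm, Int.add_mul_ediv_right _ _ hm, Int.ediv_eq_zero_of_lt (by positivity)
      (by exact_mod_cast i.isLt), zero_add]
  rw [time, ZMod.intCast_mul_add_natCast, toFin_natCast, hdiv]

theorem vproj_intCast_mul_add (j : ℤ) (i : Fin m) :
    S.vproj m ((j * m + i : ℤ) : ZMod m) = (S.p i).2 := by
  rw [ZMod.intCast_mul_add_natCast]
  exact congrArg (fun i => (S.p i).2) (S.toFin_natCast i)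

theorem pts_eq_range : S.pts = Set.range fun k : ℤ => (S.time k, S.vproj m k) := by
  have := S.neZero
  ext x
  constructor
  · rintro ⟨i, j, rfl⟩
    exact ⟨j * m + i, by simp only [time_mul_add, vproj_intCast_mul_add]⟩
  · rintro ⟨k, rfl⟩
    obtain ⟨⟨j, i⟩, rfl⟩ := (Int.divModEquiv m).symm.surjective k
    exact ⟨i, j, by simp only [Int.divModEquiv_symm_apply, time_mul_add, vproj_intCast_mul_add]⟩

theorem range_vproj : Set.range (S.vproj m) = Set.range fun i => (S.p i).2 := by
  ext x
  constructor
  · rintro ⟨j, rfl⟩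
    exact ⟨S.toFin j, rfl⟩
  · rintro ⟨i, rfl⟩
    exact ⟨(i : ℕ), congrArg (fun i => (S.p i).2) (S.toFin_natCast i)⟩

theorem DL_natCast (i : Fin m) : S.DL (i : ℕ) = if h : (i : ℕ) + 1 < m
    then (S.p ⟨i + 1, h⟩).1 - (S.p i).1 else (S.p ⟨0, S.m_pos⟩).1 + S.l - (S.p i).1 := by
  simp [DL, ZMod.val_natCast_of_lt i.isLt]

theorem DL_intCast (k : ℤ) : S.DL k = S.time (k + 1) - S.time k := by
  have := S.neZero
  obtain ⟨j, i, rfl⟩ := Int.exists_eq_mul_add_fin_s17 m k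
  rw [ZMod.intCast_mul_add_natCast, DL_natCast]
  split_ifs with h
  · have hk : j * m + i + 1 = j * m + ((⟨i + 1, h⟩ : Fin m) : ℕ) := by push_cast; ring
    rw [hk, time_mul_add, time_mul_add]
    ring
  · have hi : ((i : ℕ) : ℤ) + 1 = m := by exact_mod_cast (by omega : (i : ℕ) + 1 = m)
    have hk : j * m + i + 1 = (j + 1) * m + ((⟨0, S.m_pos⟩ : Fin m) : ℕ) := by
      push_cast
      linear_combination hi
    rw [hk, time_mul_add, time_mul_add]
    push_cast
    ring

theorem time_add_period (k : ℤ) : S.time (k + m) = S.time k + S.l := by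
  have := S.neZero
  obtain ⟨j, i, rfl⟩ := Int.exists_eq_mul_add_fin_s17 m k
  rw [show j * m + i + m = (j + 1) * m + i by ring, time_mul_add, time_mul_add]
  push_cast
  ring

theorem DL_pos (j : ZMod m) : 0 < S.DL j := by
  have := S.neZero
  rw [DL]
  split_ifs with h
  · exact sub_pos.mpr (S.t_strict (Fin.mk_lt_mk.mpr (Nat.lt_succ_self _)))
  · linarith [S.t_lt ⟨j.val, j.val_lt⟩, S.t0_nonneg]

theorem time_strictMono : StrictMono S.time :=
  strictMono_int_of_lt_succ fun k => by linarith [S.DL_intCast k, S.DL_pos k]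

variable {S} {Q : HSeq d m}

theorem exists_shift_of_pts_eq_image {a : ℝ}
    {g : EuclideanSpace ℝ (Fin d) ≃ᵢ EuclideanSpace ℝ (Fin d)}
    (h : Q.pts = (fun x : ℝ × EuclideanSpace ℝ (Fin d) => (x.1 + a, g x.2)) '' S.pts) :
    ∃ c : ℤ, (∀ k, Q.time k = S.time (k + c) + a) ∧
      ∀ j : ZMod m, Q.vproj m j = g (S.vproj m (j + c)) := by
  rw [Q.pts_eq_range, S.pts_eq_range, ← Set.range_comp] at h
  choose φ hφ using fun k => (Set.ext_iff.mp h _).mp ⟨k, rfl⟩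
  have htime (k : ℤ) : Q.time k = S.time (φ k) + a := (congrArg Prod.fst (hφ k)).symm
  have hval (k : ℤ) : Q.vproj m k = g (S.vproj m (φ k)) := (congrArg Prod.snd (hφ k)).symm
  have hmono : StrictMono φ := fun k k' hk =>
    S.time_strictMono.lt_iff_lt.mp (by linarith [htime k, htime k', Q.time_strictMono hk])
  have hsurj : Function.Surjective φ := fun k' => by
    obtain ⟨k, hk⟩ := (Set.ext_iff.mp h _).mpr ⟨k', rfl⟩
    have hk' : Q.time k = S.time k' + a := congrArg Prod.fst hk
    exact ⟨k, S.time_strictMono.injective (by linarith [htime k])⟩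
  have hφ_eq := Int.eq_add_apply_zero_of_strictMono_of_surjective hmono hsurj
  refine ⟨φ 0, fun k => by rw [htime, hφ_eq], fun j => ?_⟩
  obtain ⟨k, rfl⟩ := ZMod.intCast_surjective j
  rw [hval, hφ_eq, Int.cast_add]

theorem l_eq_of_shift {a : ℝ} {c : ℤ} (h : ∀ k, Q.time k = S.time (k + c) + a) :
    S.l = Q.l := by
  have h₀ := h 0
  have hm := h m
  rw [show (m : ℤ) + c = 0 + c + m by ring, S.time_add_period] at hm
  linarith [show Q.time m = Q.time 0 + Q.l by simpa using Q.time_add_period 0]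

theorem DL_eq_of_shift {a : ℝ} {c : ℤ} (h : ∀ k, Q.time k = S.time (k + c) + a)
    (j : ZMod m) : Q.DL j = S.DL (j + c) := by
  obtain ⟨k, rfl⟩ := ZMod.intCast_surjective j
  rw [← Int.cast_add, DL_intCast, DL_intCast, h, h, add_right_comm]
  ring

theorem norm_vproj_sub_eq_of_shift
    {g : EuclideanSpace ℝ (Fin d) ≃ᵢ EuclideanSpace ℝ (Fin d)} {s : ZMod m} (h : ∀ j : ZMod m, Q.vproj m j = g (S.vproj m (j + s))) (j i : ZMod m) :
    ‖Q.vproj m j - Q.vproj m (j + i)‖ = ‖S.vproj m (j + s) - S.vproj m (j + s + i)‖ := by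
  rw [h, h, ← dist_eq_norm, g.dist_eq, dist_eq_norm, add_right_comm]

theorem time_eq_of_DL_eq {c : ℤ} (h : ∀ j : ZMod m, Q.DL j = S.DL (j + c)) (k : ℤ) :
    Q.time k = S.time (k + c) + (Q.time 0 - S.time c) := by
  have hper : Function.Periodic (fun k : ℤ => Q.time k - S.time (k + c)) 1 := fun k => by
    have hS := S.DL_intCast (k + c)
    rw [Int.cast_add, ← h, DL_intCast] at hS
    simp only [add_right_comm k 1 c]
    linarith
  have := hper.int_mul_eq k
  simp only [Int.cast_id, mul_one, zero_add] at this
  linarith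

theorem exists_isometryEquiv_of_norm_vproj_sub_eq
    (hspan : affineSpan ℝ (Set.range fun i => (S.p i).2) = ⊤) {s : ZMod m}
    (h : ∀ j : ZMod m, ∀ i : ℕ, 1 ≤ i → i ≤ m - 1 →
      ‖Q.vproj m j - Q.vproj m (j + i)‖ = ‖S.vproj m (j + s) - S.vproj m (j + s + i)‖) :
    ∃ e : EuclideanSpace ℝ (Fin d) ≃ᵢ EuclideanSpace ℝ (Fin d),
      ∀ j : ZMod m, Q.vproj m j = e (S.vproj m (j + s)) := by
  have := S.neZero
  have hspan' : affineSpan ℝ (Set.range (S.vproj m ∘ Equiv.addRight s)) = ⊤ := by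
    rwa [(Equiv.addRight s).surjective.range_comp, range_vproj]
  obtain ⟨e, he⟩ := exists_isometryEquiv_apply_eq_of_dist_eq hspan' fun j j' => by
    rcases eq_or_ne j j' with rfl | hne
    · simp
    have hval : (j' - j).val ≠ 0 := (ZMod.val_ne_zero _).mpr (sub_ne_zero.mpr hne.symm)
    have := h j (j' - j).val (Nat.one_le_iff_ne_zero.mpr hval) (by have := (j' - j).val_lt; omega)
    simpa [dist_eq_norm, add_right_comm j s] using this
  exact ⟨e, fun j => (he j).symm⟩

theorem pts_eq_image_of_shift {a : ℝ} {c : ℤ}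
    {g : EuclideanSpace ℝ (Fin d) ≃ᵢ EuclideanSpace ℝ (Fin d)}
    (ht : ∀ k, Q.time k = S.time (k + c) + a)
    (hv : ∀ j : ZMod m, Q.vproj m j = g (S.vproj m (j + c))) :
    Q.pts = (fun x : ℝ × EuclideanSpace ℝ (Fin d) => (x.1 + a, g x.2)) '' S.pts := by
  rw [Q.pts_eq_range, S.pts_eq_range, ← Set.range_comp,
    ← (Equiv.addRight c).surjective.range_comp (_ ∘ fun k : ℤ => (S.time k, S.vproj m k))]
  congr 1
  funext k
  simp [ht, hv]

end HSeq

theorem TVI_complete_general {d m : ℕ} (S Q : HSeq d m)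
    (hpspan : affineSpan ℝ (Set.range fun i : Fin m => (S.p i).2) = ⊤) :
    (∃ (a : ℝ) (g : EuclideanSpace ℝ (Fin d) ≃ᵢ EuclideanSpace ℝ (Fin d)),
      Q.pts = (fun x : ℝ × EuclideanSpace ℝ (Fin d) => (x.1 + a, g x.2)) '' S.pts) ↔
    (S.l = Q.l ∧ ∃ s : ZMod m,
      (∀ j : ZMod m, Q.DL j = S.DL (j + s)) ∧
      (∀ j : ZMod m, ∀ i : ℕ, 1 ≤ i → i ≤ m - 1 →
        ‖Q.vproj m j - Q.vproj m (j + (i : ZMod m))‖ =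
          ‖S.vproj m (j + s) - S.vproj m (j + s + (i : ZMod m))‖)) := by
  constructor
  · rintro ⟨a, g, h⟩
    obtain ⟨c, ht, hv⟩ := HSeq.exists_shift_of_pts_eq_image h
    exact ⟨HSeq.l_eq_of_shift ht, c, HSeq.DL_eq_of_shift ht,
      fun j i _ _ => HSeq.norm_vproj_sub_eq_of_shift hv j i⟩
  · rintro ⟨-, s, hDL, hdist⟩
    obtain ⟨e, he⟩ := HSeq.exists_isometryEquiv_of_norm_vproj_sub_eq hpspan hdist
    obtain ⟨c, rfl⟩ := ZMod.intCast_surjective s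
    exact ⟨_, e, HSeq.pts_eq_image_of_shift (HSeq.time_eq_of_DL_eq hDL) he⟩

/-- the time-value invariant TVI (the time distance list together with the
full cyclic distance matrix of the value projection, up to a common cyclic permutation)
is a complete invariant of high-dimensional periodic sequences (with affinely spanning
value motifs) up to the equivalence `f × g`, where `f` is a translation of the time line
and `g` is an isometry of `ℝ^d`. -/
theorem TVI_complete {d m : ℕ} (hd : 1 ≤ d) (S Q : HSeq d m)
    (hS : S.IsMinimal) (hQ : Q.IsMinimal)
    (hpspan : affineSpan ℝ (Set.range fun i : Fin m => (S.p i).2) = ⊤)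
    (hqspan : affineSpan ℝ (Set.range fun i : Fin m => (Q.p i).2) = ⊤) :
    (∃ (a : ℝ) (g : EuclideanSpace ℝ (Fin d) ≃ᵢ EuclideanSpace ℝ (Fin d)),
      Q.pts = (fun x : ℝ × EuclideanSpace ℝ (Fin d) => (x.1 + a, g x.2)) '' S.pts) ↔
    (S.l = Q.l ∧ ∃ s : ZMod m,
      (∀ j : ZMod m, Q.DL j = S.DL (j + s)) ∧
      (∀ j : ZMod m, ∀ i : ℕ, 1 ≤ i → i ≤ m - 1 →
        ‖Q.vproj m j - Q.vproj m (j + (i : ZMod m))‖ =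
          ‖S.vproj m (j + s) - S.vproj m (j + s + (i : ZMod m))‖)) :=
  TVI_complete_general S Q hpspan
end
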